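/- Let x₀, y₀ ∈ ℝ and let u, g, h, p : [x₀,∞) × [y₀,∞) → [0,∞) be continuous. If u(x,y) ≤ g(x,y) + h(x,y) ∫_{x₀}^{x} ∫_{x₀}^{s} ∫_{y₀}^{y} p(η,τ) u(η,τ) dτ dη ds for all x ≥ x₀ and y ≥ y₀, then u(x,y) ≤ g(x,y) + h(x,y) · ( ∫_{x₀}^{x} ∫_{x₀}^{s} ∫_{y₀}^{y} p(η,τ) g(η,τ) dτ dη ds ) · exp( ∫_{x₀}^{x} ∫_{x₀}^{s} ∫_{y₀}^{y} p(η,τ) h(η,τ) dτ dη ds ) for all x ≥ x₀ and y ≥ y₀. -/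

import Mathlib

/-!
Freeze `y`. The functions `q η = ∫_{y₀}^y p(η,τ) u(η,τ) dτ`, and `a`, `k` built in the same way
from `g`, `h`, satisfy `q ≤ a + k R` on `[x₀, ∞)` with `R x = ∫_{x₀}^x ∫_{x₀}^s q`, because the
triple integral in the hypothesis is monotone in its upper `τ`-limit. With `A`, `K` the double
integrals of `a`, `k` this gives `R' ≤ A' + K' R`, so `R e^{-K} - A` is antitone and vanishes at
`x₀`, whence `R ≤ A e^K`. The data, continuous only on the quadrant, are first extended
continuously to the plane by clamping both arguments into it.
-/

open MeasureTheory Set intervalIntegral Real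

theorem le_mul_exp_of_hasDerivAt_le_add_mul {x₀ x : ℝ} {R A K R' A' K' : ℝ → ℝ}
    (hR : ∀ t, x₀ ≤ t → HasDerivAt R (R' t) t) (hA : ∀ t, x₀ ≤ t → HasDerivAt A (A' t) t)
    (hK : ∀ t, x₀ ≤ t → HasDerivAt K (K' t) t)
    (hle : ∀ t, x₀ ≤ t → R' t ≤ A' t + K' t * R t)
    (hA' : ∀ t, x₀ ≤ t → 0 ≤ A' t) (hK₀ : ∀ t, x₀ ≤ t → 0 ≤ K t)
    (h₀ : R x₀ ≤ A x₀ * exp (K x₀)) (hx : x₀ ≤ x) : R x ≤ A x * exp (K x) := by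
  have hiff : ∀ t, R t ≤ A t * exp (K t) ↔ R t * exp (-K t) - A t ≤ 0 := fun t => by
    rw [sub_nonpos, exp_neg, ← div_eq_mul_inv, div_le_iff₀ (exp_pos _)]
  have hF : ∀ t, x₀ ≤ t → HasDerivAt (fun t => R t * exp (-K t) - A t)
      (R' t * exp (-K t) + R t * (exp (-K t) * -K' t) - A' t) t :=
    fun t ht => ((hR t ht).mul (hK t ht).neg.exp).sub (hA t ht)
  have hanti : AntitoneOn (fun t => R t * exp (-K t) - A t) (Ici x₀) := by
    refine antitoneOn_of_hasDerivWithinAt_nonpos (convex_Ici x₀)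
      (fun t ht => (hF t ht).continuousAt.continuousWithinAt)
      (fun t ht => (hF t (interior_subset ht)).hasDerivWithinAt) fun t ht => ?_
    replace ht : x₀ ≤ t := interior_subset ht
    -- the derivative is `(R' - K' R) e^{-K} - A' ≤ A' (e^{-K} - 1) ≤ 0`
    have hexp : exp (-K t) ≤ 1 := exp_le_one_iff.2 (neg_nonpos.2 (hK₀ t ht))
    nlinarith [mul_le_mul_of_nonneg_right (hle t ht) (exp_pos (-K t)).le,
      mul_le_mul_of_nonneg_left hexp (hA' t ht)]
  exact (hiff x).2 ((hanti self_mem_Ici hx hx).trans ((hiff x₀).1 h₀))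

section DoubleIntegral

variable {x₀ : ℝ} {q : ℝ → ℝ}

theorem hasDerivAt_doubleIntegral (hq : Continuous q) (t : ℝ) :
    HasDerivAt (fun x => ∫ s in x₀..x, ∫ η in x₀..s, q η) (∫ η in x₀..t, q η) t :=
  ((continuous_primitive hq.intervalIntegrable x₀).integral_hasStrictDerivAt x₀ t).hasDerivAt

theorem doubleIntegral_nonneg (hq₀ : ∀ t, x₀ ≤ t → 0 ≤ q t) {x : ℝ} (hx : x₀ ≤ x) :
    0 ≤ ∫ s in x₀..x, ∫ η in x₀..s, q η :=
  integral_nonneg hx fun _ hs => integral_nonneg hs.1 fun η hη => hq₀ η hη.1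

theorem doubleIntegral_monotoneOn (hq : Continuous q) (hq₀ : ∀ t, x₀ ≤ t → 0 ≤ q t) :
    MonotoneOn (fun x => ∫ s in x₀..x, ∫ η in x₀..s, q η) (Ici x₀) :=
  fun _ hs _ _ hst => integral_mono_interval le_rfl hs hst
    (ae_restrict_of_forall_mem measurableSet_Ioc fun _ hr =>
      integral_nonneg hr.1.le fun η hη => hq₀ η hη.1)
    ((continuous_primitive hq.intervalIntegrable x₀).intervalIntegrable _ _)

theorem doubleIntegral_le_mul_exp {a k : ℝ → ℝ} (hq : Continuous q) (ha : Continuous a)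
    (hk : Continuous k) (hq₀ : ∀ t, x₀ ≤ t → 0 ≤ q t) (ha₀ : ∀ t, x₀ ≤ t → 0 ≤ a t)
    (hk₀ : ∀ t, x₀ ≤ t → 0 ≤ k t)
    (hle : ∀ t, x₀ ≤ t → q t ≤ a t + k t * ∫ s in x₀..t, ∫ η in x₀..s, q η)
    {x : ℝ} (hx : x₀ ≤ x) :
    (∫ s in x₀..x, ∫ η in x₀..s, q η) ≤
      (∫ s in x₀..x, ∫ η in x₀..s, a η) * exp (∫ s in x₀..x, ∫ η in x₀..s, k η) := by
  set R := fun x => ∫ s in x₀..x, ∫ η in x₀..s, q η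
  refine le_mul_exp_of_hasDerivAt_le_add_mul (fun t _ => hasDerivAt_doubleIntegral hq t)
    (fun t _ => hasDerivAt_doubleIntegral ha t) (fun t _ => hasDerivAt_doubleIntegral hk t)
    (fun t ht => ?_) (fun t ht => integral_nonneg ht fun η hη => ha₀ η hη.1)
    (fun t => doubleIntegral_nonneg hk₀) (by simp) hx
  calc ∫ η in x₀..t, q η ≤ ∫ η in x₀..t, (a η + k η * R t) := by
        refine integral_mono_on ht (hq.intervalIntegrable _ _)
          ((ha.add (hk.mul continuous_const)).intervalIntegrable _ _) fun η hη => ?_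
        have hR : R η ≤ R t := doubleIntegral_monotoneOn hq hq₀ hη.1 (hη.1.trans hη.2) hη.2
        exact (hle η hη.1).trans (add_le_add_right (mul_le_mul_of_nonneg_left hR (hk₀ η hη.1)) _)
    _ = (∫ η in x₀..t, a η) + (∫ η in x₀..t, k η) * R t := by
        rw [integral_add (ha.intervalIntegrable _ _) ((hk.intervalIntegrable _ _).mul_const _),
          intervalIntegral.integral_mul_const]

end DoubleIntegral

section TripleIntegral

variable {x₀ y₀ : ℝ}

theorem tripleIntegral_congr {f F : ℝ → ℝ → ℝ} (hfF : ∀ η τ, x₀ ≤ η → y₀ ≤ τ → f η τ = F η τ)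
    {x y : ℝ} (hx : x₀ ≤ x) (hy : y₀ ≤ y) :
    (∫ s in x₀..x, ∫ η in x₀..s, ∫ τ in y₀..y, f η τ) =
      ∫ s in x₀..x, ∫ η in x₀..s, ∫ τ in y₀..y, F η τ := by
  refine integral_congr fun s hs => ?_
  rw [uIcc_of_le hx] at hs
  refine integral_congr fun η hη => integral_congr fun τ hτ => ?_
  rw [uIcc_of_le hs.1] at hη
  rw [uIcc_of_le hy] at hτ
  exact hfF η τ hη.1 hτ.1

theorem tripleIntegral_monotoneOn {f : ℝ → ℝ → ℝ} (hf : Continuous fun z : ℝ × ℝ => f z.1 z.2)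
    (hf₀ : ∀ η τ, x₀ ≤ η → y₀ ≤ τ → 0 ≤ f η τ) {x : ℝ} (hx : x₀ ≤ x) :
    MonotoneOn (fun y => ∫ s in x₀..x, ∫ η in x₀..s, ∫ τ in y₀..y, f η τ) (Ici y₀) := by
  intro y₁ hy₁ y₂ _ hy
  have hcont : ∀ y, Continuous fun η => ∫ τ in y₀..y, f η τ := fun y => by fun_prop
  refine integral_mono_on hx
    ((continuous_primitive (hcont y₁).intervalIntegrable x₀).intervalIntegrable _ _)
    ((continuous_primitive (hcont y₂).intervalIntegrable x₀).intervalIntegrable _ _) fun s hs => ?_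
  refine integral_mono_on hs.1 ((hcont y₁).intervalIntegrable _ _)
    ((hcont y₂).intervalIntegrable _ _)
    fun η hη => integral_mono_interval le_rfl hy₁ hy
      (ae_restrict_of_forall_mem measurableSet_Ioc fun τ hτ => hf₀ η τ hη.1 hτ.1.le) ?_
  exact (hf.comp (continuous_const.prodMk continuous_id)).intervalIntegrable _ _

theorem tripleIntegral_gronwall_of_continuous {u g h p : ℝ → ℝ → ℝ}
    (hu : Continuous fun z : ℝ × ℝ => u z.1 z.2) (hg : Continuous fun z : ℝ × ℝ => g z.1 z.2)
    (hh : Continuous fun z : ℝ × ℝ => h z.1 z.2) (hp : Continuous fun z : ℝ × ℝ => p z.1 z.2)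
    (hu₀ : ∀ x y, x₀ ≤ x → y₀ ≤ y → 0 ≤ u x y) (hg₀ : ∀ x y, x₀ ≤ x → y₀ ≤ y → 0 ≤ g x y)
    (hh₀ : ∀ x y, x₀ ≤ x → y₀ ≤ y → 0 ≤ h x y) (hp₀ : ∀ x y, x₀ ≤ x → y₀ ≤ y → 0 ≤ p x y)
    (hineq : ∀ x y, x₀ ≤ x → y₀ ≤ y →
      u x y ≤ g x y + h x y * ∫ s in x₀..x, ∫ η in x₀..s, ∫ τ in y₀..y, p η τ * u η τ)
    {x y : ℝ} (hx : x₀ ≤ x) (hy : y₀ ≤ y) :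
    u x y ≤ g x y + h x y *
      (∫ s in x₀..x, ∫ η in x₀..s, ∫ τ in y₀..y, p η τ * g η τ) *
      exp (∫ s in x₀..x, ∫ η in x₀..s, ∫ τ in y₀..y, p η τ * h η τ) := by
  have hcont : ∀ f : ℝ → ℝ → ℝ, (Continuous fun z : ℝ × ℝ => f z.1 z.2) →
      Continuous fun η => ∫ τ in y₀..y, p η τ * f η τ := fun f hf => by fun_prop
  have hnonneg : ∀ f : ℝ → ℝ → ℝ, (∀ x y, x₀ ≤ x → y₀ ≤ y → 0 ≤ f x y) →
      ∀ t, x₀ ≤ t → 0 ≤ ∫ τ in y₀..y, p t τ * f t τ := fun f hf₀ t ht =>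
    integral_nonneg hy fun τ hτ => mul_nonneg (hp₀ t τ ht hτ.1) (hf₀ t τ ht hτ.1)
  have hle : ∀ t, x₀ ≤ t → (∫ τ in y₀..y, p t τ * u t τ) ≤ (∫ τ in y₀..y, p t τ * g t τ) +
      (∫ τ in y₀..y, p t τ * h t τ) * ∫ s in x₀..t, ∫ η in x₀..s, ∫ τ in y₀..y, p η τ * u η τ := by
    intro t ht
    set Z := ∫ s in x₀..t, ∫ η in x₀..s, ∫ τ in y₀..y, p η τ * u η τ
    have hZ : ∀ τ, y₀ ≤ τ → τ ≤ y → u t τ ≤ g t τ + h t τ * Z := fun τ hτ hτy =>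
      (hineq t τ ht hτ).trans (add_le_add_right (mul_le_mul_of_nonneg_left
        (tripleIntegral_monotoneOn (hp.mul hu)
          (fun η τ hη hτ => mul_nonneg (hp₀ η τ hη hτ) (hu₀ η τ hη hτ)) ht hτ hy hτy)
        (hh₀ t τ ht hτ)) _)
    have hslice : ∀ f : ℝ → ℝ → ℝ, (Continuous fun z : ℝ × ℝ => f z.1 z.2) →
        Continuous fun τ => p t τ * f t τ := fun f hf => by fun_prop
    calc ∫ τ in y₀..y, p t τ * u t τ ≤ ∫ τ in y₀..y, (p t τ * g t τ + p t τ * h t τ * Z) := by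
          refine integral_mono_on hy ((hslice u hu).intervalIntegrable _ _)
            (((hslice g hg).add ((hslice h hh).mul continuous_const)).intervalIntegrable _ _)
            fun τ hτ => ?_
          have := mul_le_mul_of_nonneg_left (hZ τ hτ.1 hτ.2) (hp₀ t τ ht hτ.1)
          linarith
      _ = _ := by
          rw [integral_add ((hslice g hg).intervalIntegrable _ _)
            (((hslice h hh).intervalIntegrable _ _).mul_const Z),
            intervalIntegral.integral_mul_const]
  calc u x y ≤ g x y + h x y * ∫ s in x₀..x, ∫ η in x₀..s, ∫ τ in y₀..y, p η τ * u η τ :=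
        hineq x y hx hy
    _ ≤ _ := add_le_add_right (mul_le_mul_of_nonneg_left (doubleIntegral_le_mul_exp
        (hcont u hu) (hcont g hg) (hcont h hh) (hnonneg u hu₀) (hnonneg g hg₀) (hnonneg h hh₀)
        hle hx) (hh₀ x y hx hy)) _
    _ = _ := by rw [mul_assoc]

end TripleIntegral

section QuadrantExtend

variable {x₀ y₀ : ℝ}

def quadrantExtend (x₀ y₀ : ℝ) (f : ℝ → ℝ → ℝ) (x y : ℝ) : ℝ := f (max x x₀) (max y y₀)

theorem quadrantExtend_of_le {f : ℝ → ℝ → ℝ} {x y : ℝ} (hx : x₀ ≤ x) (hy : y₀ ≤ y) :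
    quadrantExtend x₀ y₀ f x y = f x y := by
  rw [quadrantExtend, max_eq_left hx, max_eq_left hy]

theorem continuous_quadrantExtend {f : ℝ → ℝ → ℝ}
    (hf : ContinuousOn (fun z : ℝ × ℝ => f z.1 z.2) (Ici x₀ ×ˢ Ici y₀)) :
    Continuous fun z : ℝ × ℝ => quadrantExtend x₀ y₀ f z.1 z.2 :=
  hf.comp_continuous (f := fun z : ℝ × ℝ => (max z.1 x₀, max z.2 y₀)) (by fun_prop)
    fun z => ⟨le_max_right z.1 x₀, le_max_right z.2 y₀⟩

end QuadrantExtend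

/-- Continuous (𝕋₁ = 𝕋₂ = ℝ) case of Theorem 2.4: the linear-kernel special
case L(η,τ,u) = p(η,τ)·u of Theorem 2.3. -/
theorem stmt_6 (x₀ y₀ : ℝ) (u g h p : ℝ → ℝ → ℝ)
    (hu_cont : ContinuousOn (fun z : ℝ × ℝ => u z.1 z.2) (Set.Ici x₀ ×ˢ Set.Ici y₀))
    (hg_cont : ContinuousOn (fun z : ℝ × ℝ => g z.1 z.2) (Set.Ici x₀ ×ˢ Set.Ici y₀))
    (hh_cont : ContinuousOn (fun z : ℝ × ℝ => h z.1 z.2) (Set.Ici x₀ ×ˢ Set.Ici y₀))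
    (hp_cont : ContinuousOn (fun z : ℝ × ℝ => p z.1 z.2) (Set.Ici x₀ ×ˢ Set.Ici y₀))
    (hu_nonneg : ∀ x y, x₀ ≤ x → y₀ ≤ y → 0 ≤ u x y)
    (hg_nonneg : ∀ x y, x₀ ≤ x → y₀ ≤ y → 0 ≤ g x y)
    (hh_nonneg : ∀ x y, x₀ ≤ x → y₀ ≤ y → 0 ≤ h x y)
    (hp_nonneg : ∀ x y, x₀ ≤ x → y₀ ≤ y → 0 ≤ p x y)
    (hineq : ∀ x y, x₀ ≤ x → y₀ ≤ y →
      u x y ≤ g x y + h x y *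
        ∫ s in x₀..x, ∫ η in x₀..s, ∫ τ in y₀..y, p η τ * u η τ) :
    ∀ x y, x₀ ≤ x → y₀ ≤ y →
      u x y ≤ g x y + h x y *
        (∫ s in x₀..x, ∫ η in x₀..s, ∫ τ in y₀..y, p η τ * g η τ) *
        Real.exp (∫ s in x₀..x, ∫ η in x₀..s, ∫ τ in y₀..y, p η τ * h η τ) := by
  intro x y hx hy
  set E := quadrantExtend x₀ y₀
  have hE₀ : ∀ f : ℝ → ℝ → ℝ, (∀ x y, x₀ ≤ x → y₀ ≤ y → 0 ≤ f x y) →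
      ∀ x y, x₀ ≤ x → y₀ ≤ y → 0 ≤ E f x y :=
    fun f hf _ _ _ _ => hf _ _ (le_max_right _ _) (le_max_right _ _)
  have hE : ∀ f : ℝ → ℝ → ℝ, ∀ x y, x₀ ≤ x → y₀ ≤ y →
      (∫ s in x₀..x, ∫ η in x₀..s, ∫ τ in y₀..y, E p η τ * E f η τ) =
        ∫ s in x₀..x, ∫ η in x₀..s, ∫ τ in y₀..y, p η τ * f η τ := fun f x y hx hy =>
    tripleIntegral_congr (fun η τ hη hτ => by simp only [E, quadrantExtend_of_le hη hτ]) hx hy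
  have := tripleIntegral_gronwall_of_continuous (continuous_quadrantExtend hu_cont)
    (continuous_quadrantExtend hg_cont) (continuous_quadrantExtend hh_cont)
    (continuous_quadrantExtend hp_cont) (hE₀ u hu_nonneg) (hE₀ g hg_nonneg) (hE₀ h hh_nonneg)
    (hE₀ p hp_nonneg) (fun a b ha hb => ?_) hx hy
  · simpa only [E, quadrantExtend_of_le hx hy, hE g x y hx hy, hE h x y hx hy] using this
  · simpa only [E, quadrantExtend_of_le ha hb, hE u a b ha hb] using hineq a b ha hb
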